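/- arXiv:2304.08377 — 4 statements merged into one kernel-verified Lean document; each statement's English description precedes it below -/
import Mathlib

section
/- Let p be a prime, h ≥ 1, and set b_ℓ = (p^{2ℓ+1} + 1)/(p + 1) for 0 ≤ ℓ ≤ h-1. For an integer j with 0 ≤ j ≤ p^h - 1 having p-adic expansion j = a₁ + a₂ p + ⋯ + a_h p^{h-1} (0 ≤ a_i < p), define B(j) = Σ_{ℓ=1}^{h} a_ℓ b_{ℓ-1} p^{h-ℓ}. If 1 ≤ j ≤ p^h - 1 and s is the smallest index (1 ≤ s ≤ h) such that the coefficient a_s in the p-adic expansion of j-1 satisfies a_s < p - 1 (so j - 1 = (p-1)(1 + p + ⋯ + p^{s-2}) + a_s p^{s-1} + ⋯), then B(j) - B(j-1) = p^{h-s}. -/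
/-!
Write `n = j - 1` and `m = s - 1`. Adding one to `n` turns its `m` lowest digits, all equal to
`p - 1`, into `0`, raises the digit at position `m` by one and leaves the higher digits alone, so
`B (n + 1) - B n = b_m p^(h-1-m) - (p - 1) ∑_{ℓ < m} b_ℓ p^(h-1-ℓ)`. This is `p^(h-1-m)` by the
identity `b_m = 1 + (p - 1) ∑_{ℓ < m} b_ℓ p^(m-ℓ)`, which follows by induction on `m` from the
recurrence `b_(m+1) = p² b_m - (p - 1)`.
-/

open Finset

theorem Odd.add_one_mul_pow_add_one_div {k : ℕ} (hk : Odd k) (p : ℕ) :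
    (p + 1) * ((p ^ k + 1) / (p + 1)) = p ^ k + 1 :=
  Nat.mul_div_cancel' (by simpa using Odd.nat_add_dvd_pow_add_pow p 1 hk)

section Coefficients

variable {p : ℕ} {b : ℕ → ℕ}

theorem coeff_succ_eq_sq_mul_sub (hb : ∀ ℓ, (p + 1) * b ℓ = p ^ (2 * ℓ + 1) + 1) (m : ℕ) :
    (b (m + 1) : ℤ) = p ^ 2 * b m - (p - 1) := by
  have hb' (ℓ : ℕ) : ((p : ℤ) + 1) * b ℓ = p ^ (2 * ℓ + 1) + 1 := by exact_mod_cast hb ℓ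
  refine mul_left_cancel₀ (by positivity : (p : ℤ) + 1 ≠ 0) ?_
  linear_combination hb' (m + 1) - (p : ℤ) ^ 2 * hb' m

theorem coeff_mul_pow_eq_pow_add_sum (hb : ∀ ℓ, (p + 1) * b ℓ = p ^ (2 * ℓ + 1) + 1) {m n : ℕ}
    (hmn : m ≤ n) :
    (b m : ℤ) * p ^ (n - m) = p ^ (n - m) + (p - 1) * ∑ ℓ ∈ range m, (b ℓ : ℤ) * p ^ (n - ℓ) := by
  induction m with
  | zero =>
    have hb0 : ((p : ℤ) + 1) * b 0 = (p + 1) * 1 := by exact_mod_cast (hb 0).trans (by ring)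
    simp [mul_left_cancel₀ (by positivity : (p : ℤ) + 1 ≠ 0) hb0]
  | succ m ih =>
    obtain ⟨k, rfl⟩ := Nat.exists_eq_add_of_le hmn
    have hk : m + 1 + k - m = k + 1 := by omega
    rw [sum_range_succ, Nat.add_sub_cancel_left, coeff_succ_eq_sq_mul_sub hb, hk]
    rw [hk] at ih
    linear_combination ih (by omega)

end Coefficients

namespace Nat

variable {p n m : ℕ}

theorem mod_pow_add_one_of_digits_eq (hp : 0 < p) (hlow : ∀ t < m, n / p ^ t % p = p - 1) :
    n % p ^ m + 1 = p ^ m := by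
  induction m with
  | zero => simp [mod_one]
  | succ k ih =>
    have hpk : p ^ k * (p - 1) + p ^ k = p ^ k * p := by
      rw [← mul_add_one, Nat.sub_add_cancel hp]
    have := ih fun t ht => hlow t (by omega)
    rw [pow_succ, mod_mul, hlow k (by omega)]
    omega

theorem succ_eq_mul_pow_of_digits_eq (hp : 0 < p) (hlow : ∀ t < m, n / p ^ t % p = p - 1) :
    n + 1 = (n / p ^ m + 1) * p ^ m := by
  have := div_add_mod n (p ^ m)
  have := mod_pow_add_one_of_digits_eq hp hlow
  linarith

theorem succ_div_pow_mod_of_lt (hlow : ∀ t < m, n / p ^ t % p = p - 1) (hm : n / p ^ m % p < p - 1)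
    {ℓ : ℕ} (hℓ : ℓ < m) : (n + 1) / p ^ ℓ % p = 0 := by
  have hp : 0 < p := by omega
  rw [succ_eq_mul_pow_of_digits_eq hp hlow, Nat.mul_div_assoc _ (pow_dvd_pow p hℓ.le),
    Nat.pow_div hℓ.le hp]
  exact mod_eq_zero_of_dvd (dvd_mul_of_dvd_right (dvd_pow_self p (by omega)) _)

theorem succ_div_pow_mod_self (hlow : ∀ t < m, n / p ^ t % p = p - 1) (hm : n / p ^ m % p < p - 1) :
    (n + 1) / p ^ m % p = n / p ^ m % p + 1 := by
  have hp : 0 < p := by omega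
  rw [succ_eq_mul_pow_of_digits_eq hp hlow, Nat.mul_div_cancel _ (by positivity), add_mod,
    mod_eq_of_lt (by omega : 1 < p)]
  exact mod_eq_of_lt (by omega)

theorem succ_div_pow_of_gt (hlow : ∀ t < m, n / p ^ t % p = p - 1) (hm : n / p ^ m % p < p - 1)
    {ℓ : ℕ} (hℓ : m < ℓ) : (n + 1) / p ^ ℓ = n / p ^ ℓ := by
  have hp : 0 < p := by omega
  refine succ_div_of_not_dvd fun hdvd => ?_
  have hdvd' : p ^ m * p ∣ p ^ m * (n / p ^ m + 1) := by
    rw [← pow_succ, mul_comm, ← succ_eq_mul_pow_of_digits_eq hp hlow]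
    exact (pow_dvd_pow p hℓ).trans hdvd
  have := mod_eq_zero_of_dvd (Nat.dvd_of_mul_dvd_mul_left (by positivity) hdvd')
  rw [add_mod, mod_eq_of_lt (by omega : 1 < p), mod_eq_of_lt (by omega)] at this
  omega

end Nat

def weightedDigitSum (p h : ℕ) (b : ℕ → ℕ) (n : ℕ) : ℕ :=
  ∑ ℓ ∈ range h, n / p ^ ℓ % p * b ℓ * p ^ (h - 1 - ℓ)

theorem weightedDigitSum_succ {p h n m : ℕ} {b : ℕ → ℕ}
    (hb : ∀ ℓ, (p + 1) * b ℓ = p ^ (2 * ℓ + 1) + 1)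
    (hlow : ∀ t < m, n / p ^ t % p = p - 1) (hm : n / p ^ m % p < p - 1) (hmh : m < h) :
    weightedDigitSum p h b (n + 1) = weightedDigitSum p h b n + p ^ (h - 1 - m) := by
  have sum_split (f : ℕ → ℕ) :
      ∑ ℓ ∈ range h, f ℓ = ∑ ℓ ∈ range m, f ℓ + f m + ∑ ℓ ∈ Ico (m + 1) h, f ℓ := by
    rw [← sum_range_add_sum_Ico f (show m + 1 ≤ h by omega), sum_range_succ]
  have low_succ : ∑ ℓ ∈ range m, (n + 1) / p ^ ℓ % p * b ℓ * p ^ (h - 1 - ℓ) = 0 :=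
    sum_eq_zero fun ℓ hℓ => by simp [Nat.succ_div_pow_mod_of_lt hlow hm (mem_range.1 hℓ)]
  have low : ∑ ℓ ∈ range m, n / p ^ ℓ % p * b ℓ * p ^ (h - 1 - ℓ) =
      (p - 1) * ∑ ℓ ∈ range m, b ℓ * p ^ (h - 1 - ℓ) := by
    rw [mul_sum]
    exact sum_congr rfl fun ℓ hℓ => by rw [hlow ℓ (mem_range.1 hℓ), mul_assoc]
  have high : ∑ ℓ ∈ Ico (m + 1) h, (n + 1) / p ^ ℓ % p * b ℓ * p ^ (h - 1 - ℓ) =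
      ∑ ℓ ∈ Ico (m + 1) h, n / p ^ ℓ % p * b ℓ * p ^ (h - 1 - ℓ) :=
    sum_congr rfl fun ℓ hℓ => by rw [Nat.succ_div_pow_of_gt hlow hm (mem_Ico.1 hℓ).1]
  have key : b m * p ^ (h - 1 - m) =
      p ^ (h - 1 - m) + (p - 1) * ∑ ℓ ∈ range m, b ℓ * p ^ (h - 1 - ℓ) := by
    have := coeff_mul_pow_eq_pow_add_sum hb (show m ≤ h - 1 by omega)
    zify [show 1 ≤ p by omega]
    exact this
  unfold weightedDigitSum
  rw [sum_split, sum_split, low_succ, low, high, Nat.succ_div_pow_mod_self hlow hm, add_one_mul,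
    add_mul, key]
  ring

theorem stmt_4_general (p : ℕ) (h : ℕ)
    (b : ℕ → ℕ) (hb : ∀ ℓ, b ℓ = (p ^ (2 * ℓ + 1) + 1) / (p + 1))
    (B : ℕ → ℕ)
    (hB : ∀ j, B j = ∑ ℓ ∈ Finset.range h, ((j / p ^ ℓ) % p) * b ℓ * p ^ (h - 1 - ℓ))
    (j s : ℕ) (hj1 : 1 ≤ j)
    (hs1 : 1 ≤ s) (hs2 : s ≤ h)
    (hsdig : ((j - 1) / p ^ (s - 1)) % p < p - 1)
    (hsmin : ∀ t, 1 ≤ t → t < s → ((j - 1) / p ^ (t - 1)) % p = p - 1) :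
    B j = B (j - 1) + p ^ (h - s) := by
  obtain ⟨n, rfl⟩ : ∃ n, j = n + 1 := ⟨j - 1, by omega⟩
  obtain ⟨m, rfl⟩ : ∃ m, s = m + 1 := ⟨s - 1, by omega⟩
  have hb' (ℓ : ℕ) : (p + 1) * b ℓ = p ^ (2 * ℓ + 1) + 1 := by
    rw [hb]; exact (odd_two_mul_add_one ℓ).add_one_mul_pow_add_one_div p
  have hlow (t : ℕ) (ht : t < m) : n / p ^ t % p = p - 1 := by
    simpa using hsmin (t + 1) (by omega) (by omega)
  simp only [Nat.add_sub_cancel] at hsdig ⊢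
  rw [hB, hB, show h - (m + 1) = h - 1 - m by omega]
  exact weightedDigitSum_succ hb' hlow hsdig (by omega)

/-- with `b ℓ = (p^(2ℓ+1)+1)/(p+1)` and
`B j = ∑_{ℓ=0}^{h-1} a_{ℓ+1}(j) · b ℓ · p^(h-1-ℓ)` (where `a_{ℓ+1}(j) = (j / p^ℓ) % p` are the
p-adic digits of `j`), if `s` is the smallest index `1 ≤ s ≤ h` such that the digit `a_s`
of `j - 1` is `< p - 1`, then `B j = B (j-1) + p^(h-s)`. -/
theorem stmt_4 (p : ℕ) (hp : p.Prime) (h : ℕ) (hh : 1 ≤ h)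
    (b : ℕ → ℕ) (hb : ∀ ℓ, b ℓ = (p ^ (2 * ℓ + 1) + 1) / (p + 1))
    (B : ℕ → ℕ)
    (hB : ∀ j, B j = ∑ ℓ ∈ Finset.range h, ((j / p ^ ℓ) % p) * b ℓ * p ^ (h - 1 - ℓ))
    (j s : ℕ) (hj1 : 1 ≤ j) (hj2 : j ≤ p ^ h - 1)
    (hs1 : 1 ≤ s) (hs2 : s ≤ h)
    (hsdig : ((j - 1) / p ^ (s - 1)) % p < p - 1)
    (hsmin : ∀ t, 1 ≤ t → t < s → ((j - 1) / p ^ (t - 1)) % p = p - 1) :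
    B j = B (j - 1) + p ^ (h - s) :=
  stmt_4_general p h b hb B hB j s hj1 hs1 hs2 hsdig hsmin
end

section
/- Let p be a prime, h ≥ 1, b_ℓ = (p^{2ℓ+1}+1)/(p+1), and B(j) = Σ_{ℓ=1}^{h} a_ℓ b_{ℓ-1} p^{h-ℓ} where j = Σ a_ℓ p^{ℓ-1} is the p-adic expansion. Define π_j = ⌊B(j)/p^h⌋. Then for 1 ≤ j ≤ p^h - 1: π_j = π_{j-1} + 1 if (p+1) divides j, and π_j = π_{j-1} otherwise. -/
open Finset

lemma aux_dvd (p : ℕ) (hp : 1 ≤ p) (ℓ : ℕ) : (p + 1) ∣ p ^ (2 * ℓ + 1) + 1 := by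
  induction ℓ with
  | zero => simp
  | succ n ih =>
      have key : p ^ (2 * (n + 1) + 1) + 1 + (p + 1) * (p - 1) = p ^ 2 * (p ^ (2 * n + 1) + 1) := by
        obtain ⟨q, rfl⟩ : ∃ q, p = q + 1 := ⟨p - 1, by omega⟩
        simp only [Nat.add_sub_cancel]
        ring
      have h1 : (p + 1) ∣ p ^ 2 * (p ^ (2 * n + 1) + 1) := ih.mul_left _
      have h2 : (p + 1) ∣ (p + 1) * (p - 1) := Dvd.intro _ rfl
      have h3 := Nat.dvd_sub h1 h2
      rw [← key, Nat.add_sub_cancel] at h3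
      exact h3

lemma digits_sum (p : ℕ) (hp : 1 ≤ p) :
    ∀ h j, j < p ^ h → ∑ ℓ ∈ range h, (j / p ^ ℓ % p) * p ^ ℓ = j := by
  intro h
  induction h with
  | zero =>
      intro j hj
      have : j = 0 := by simpa using hj
      subst this
      simp
  | succ n ih =>
      intro j hj
      rw [Finset.sum_range_succ']
      have e : ∀ i ∈ range n, j / p ^ (i + 1) % p * p ^ (i + 1)
          = (j / p / p ^ i % p * p ^ i) * p := by
        intro i _
        have h1 : j / p ^ (i + 1) = j / p / p ^ i := by
          rw [Nat.div_div_eq_div_mul, ← pow_succ']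
        rw [h1, pow_succ]
        ring
      rw [Finset.sum_congr rfl e, ← Finset.sum_mul]
      have hjp : j / p < p ^ n := by
        rw [Nat.div_lt_iff_lt_mul (by omega)]
        rw [pow_succ] at hj
        exact hj
      rw [ih (j / p) hjp]
      simp only [pow_zero, mul_one, Nat.div_one]
      rw [mul_comm]
      exact Nat.div_add_mod j p

lemma geom_nat (p : ℕ) (hp : 1 ≤ p) :
    ∀ h, ∑ ℓ ∈ range h, (p - 1) * p ^ ℓ = p ^ h - 1 := by
  intro h
  induction h with
  | zero => simp
  | succ n ih =>
      rw [Finset.sum_range_succ, ih, pow_succ]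
      have h1 : 1 ≤ p ^ n := Nat.one_le_pow _ _ (by omega)
      have h2 : (p - 1) * p ^ n = p ^ n * p - p ^ n := by
        rw [Nat.sub_mul, one_mul, mul_comm]
      have h3 : p ^ n ≤ p ^ n * p := Nat.le_mul_of_pos_right _ (by omega)
      omega

lemma key_div (p h : ℕ) (hp : 1 ≤ p)
    (b : ℕ → ℕ) (hb : ∀ ℓ, b ℓ = (p ^ (2 * ℓ + 1) + 1) / (p + 1))
    (B : ℕ → ℕ)
    (hB : ∀ j, B j = ∑ ℓ ∈ Finset.range h, ((j / p ^ ℓ) % p) * b ℓ * p ^ (h - 1 - ℓ))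
    (j : ℕ) (hj : j < p ^ h) : B j / p ^ h = j / (p + 1) := by
  set R := ∑ ℓ ∈ range h, (j / p ^ ℓ % p) * p ^ (h - 1 - ℓ) with hR
  have hbm : ∀ ℓ, (p + 1) * b ℓ = p ^ (2 * ℓ + 1) + 1 := fun ℓ => by
    rw [hb]; exact Nat.mul_div_cancel' (aux_dvd p hp ℓ)
  have key : (p + 1) * B j = p ^ h * j + R := by
    rw [hB, Finset.mul_sum]
    have step : ∀ ℓ ∈ range h, (p + 1) * ((j / p ^ ℓ % p) * b ℓ * p ^ (h - 1 - ℓ))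
        = (j / p ^ ℓ % p * p ^ ℓ) * p ^ h + (j / p ^ ℓ % p) * p ^ (h - 1 - ℓ) := by
      intro ℓ hℓ
      have hℓ' : ℓ < h := Finset.mem_range.mp hℓ
      have hpow : p ^ (2 * ℓ + 1) * p ^ (h - 1 - ℓ) = p ^ ℓ * p ^ h := by
        rw [← pow_add, ← pow_add]
        congr 1
        omega
      calc (p + 1) * ((j / p ^ ℓ % p) * b ℓ * p ^ (h - 1 - ℓ))
          = (j / p ^ ℓ % p) * ((p + 1) * b ℓ) * p ^ (h - 1 - ℓ) := by ring
        _ = (j / p ^ ℓ % p) * (p ^ (2 * ℓ + 1) + 1) * p ^ (h - 1 - ℓ) := by rw [hbm]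
        _ = (j / p ^ ℓ % p) * (p ^ (2 * ℓ + 1) * p ^ (h - 1 - ℓ))
              + (j / p ^ ℓ % p) * p ^ (h - 1 - ℓ) := by ring
        _ = (j / p ^ ℓ % p * p ^ ℓ) * p ^ h + (j / p ^ ℓ % p) * p ^ (h - 1 - ℓ) := by
              rw [hpow]; ring
    rw [Finset.sum_congr rfl step, Finset.sum_add_distrib, ← Finset.sum_mul,
        digits_sum p hp h j hj]
    ring
  have hR_lt : R < p ^ h := by
    have h1 : R ≤ ∑ ℓ ∈ range h, (p - 1) * p ^ (h - 1 - ℓ) := by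
      apply Finset.sum_le_sum
      intro ℓ _
      apply Nat.mul_le_mul_right
      have := Nat.mod_lt (j / p ^ ℓ) (show 0 < p by omega)
      omega
    have h2 : ∑ ℓ ∈ range h, (p - 1) * p ^ (h - 1 - ℓ) = p ^ h - 1 := by
      rw [Finset.sum_range_reflect (fun i => (p - 1) * p ^ i) h]
      exact geom_nat p hp h
    have h3 : 1 ≤ p ^ h := Nat.one_le_pow _ _ (by omega)
    omega
  have hq := Nat.div_add_mod j (p + 1)
  set q := j / (p + 1) with hqdef
  set r := j % (p + 1) with hrdef
  have hr : r < p + 1 := Nat.mod_lt _ (by omega)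
  have hlow : q * p ^ h ≤ B j := by
    have hle : (p + 1) * (q * p ^ h) ≤ (p + 1) * B j := by
      rw [key]
      calc (p + 1) * (q * p ^ h) = p ^ h * ((p + 1) * q) := by ring
        _ ≤ p ^ h * j := Nat.mul_le_mul_left _ (by omega)
        _ ≤ p ^ h * j + R := Nat.le_add_right _ _
    exact Nat.le_of_mul_le_mul_left hle (by omega)
  have hhigh : B j < (q + 1) * p ^ h := by
    have hlt : (p + 1) * B j < (p + 1) * ((q + 1) * p ^ h) := by
      rw [key]
      have hj_eq : j = (p + 1) * q + r := by omega
      have e1 : p ^ h * ((p + 1) * q + r) = (p + 1) * (q * p ^ h) + p ^ h * r := by ring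
      have e2 : (p + 1) * ((q + 1) * p ^ h) = (p + 1) * (q * p ^ h) + p ^ h * p + p ^ h := by
        ring
      have e3 : p ^ h * r ≤ p ^ h * p := Nat.mul_le_mul_left _ (by omega)
      rw [hj_eq]
      omega
    exact lt_of_mul_lt_mul_left hlt (Nat.zero_le _)
  exact Nat.div_eq_of_lt_le hlow (by simpa [Nat.succ_eq_add_one] using hhigh)

/-- with `b ℓ = (p^(2ℓ+1)+1)/(p+1)`, `B` the digit-weighted sum and
`π j = ⌊B j / p^h⌋`, for `1 ≤ j ≤ p^h - 1` one has `π j = π (j-1) + 1` iff `(p+1) ∣ j`,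
and `π j = π (j-1)` otherwise. -/
theorem stmt_5 (p : ℕ) (hp : p.Prime) (h : ℕ) (hh : 1 ≤ h)
    (b : ℕ → ℕ) (hb : ∀ ℓ, b ℓ = (p ^ (2 * ℓ + 1) + 1) / (p + 1))
    (B : ℕ → ℕ)
    (hB : ∀ j, B j = ∑ ℓ ∈ Finset.range h, ((j / p ^ ℓ) % p) * b ℓ * p ^ (h - 1 - ℓ))
    (π : ℕ → ℕ) (hπ : ∀ j, π j = B j / p ^ h)
    (j : ℕ) (hj1 : 1 ≤ j) (hj2 : j ≤ p ^ h - 1) :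
    ((p + 1) ∣ j → π j = π (j - 1) + 1) ∧ (¬ (p + 1) ∣ j → π j = π (j - 1)) := by
  have hp1 : 1 ≤ p := hp.one_lt.le
  have hph : 1 ≤ p ^ h := Nat.one_le_pow _ _ (by omega)
  have hjlt : j < p ^ h := by omega
  have hj1lt : j - 1 < p ^ h := by omega
  have e1 : π j = j / (p + 1) := by
    rw [hπ]; exact key_div p h hp1 b hb B hB j hjlt
  have e2 : π (j - 1) = (j - 1) / (p + 1) := by
    rw [hπ]; exact key_div p h hp1 b hb B hB (j - 1) hj1lt
  constructor
  · rintro ⟨k, rfl⟩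
    obtain ⟨m, rfl⟩ : ∃ m, k = m + 1 := by
      rcases Nat.eq_zero_or_pos k with h0 | h1
      · subst h0; simp at hj1
      · exact ⟨k - 1, by omega⟩
    rw [e1, e2]
    have d1 : (p + 1) * (m + 1) / (p + 1) = m + 1 :=
      Nat.mul_div_cancel_left _ (by omega)
    have hsub : (p + 1) * (m + 1) - 1 = (p + 1) * m + p := by
      have : (p + 1) * (m + 1) = (p + 1) * m + p + 1 := by ring
      omega
    have d2 : ((p + 1) * (m + 1) - 1) / (p + 1) = m := by
      rw [hsub, Nat.mul_add_div (by omega), Nat.div_eq_of_lt (by omega)]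
      omega
    rw [d1, d2]
  · intro hnd
    rw [e1, e2]
    have hr : j % (p + 1) ≠ 0 := fun hh0 => hnd (Nat.dvd_of_mod_eq_zero hh0)
    have hq := Nat.div_add_mod j (p + 1)
    have hrlt : j % (p + 1) < p + 1 := Nat.mod_lt _ (by omega)
    have h1 : j - 1 = (p + 1) * (j / (p + 1)) + (j % (p + 1) - 1) := by omega
    have hrlt' : j % (p + 1) - 1 < p + 1 := Nat.lt_of_le_of_lt (Nat.sub_le _ _) hrlt
    rw [h1, Nat.mul_add_div (by omega), Nat.div_eq_of_lt hrlt']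
    omega
end

section
/- Let p be a prime, h ≥ 1, b_ℓ = (p^{2ℓ+1}+1)/(p+1), and B(j) = Σ_{ℓ=1}^{h} a_ℓ b_{ℓ-1} p^{h-ℓ} where j = Σ a_ℓ p^{ℓ-1} in base p. Then p^h does not divide B(j) for any 1 ≤ j ≤ p^h - 1. -/
/-!
Let `L` be the position of the leading base-`p` digit of `j`. In `B j` the terms with `ℓ > L`
vanish, those with `ℓ < L` are divisible by `p ^ (h - L)`, and the term `ℓ = L` is
`a_L b_L p ^ (h - 1 - L)` with `p ∤ a_L` and `p ∤ b_L`, since `(p + 1) b_L = p ^ (2L+1) + 1 ≡ 1`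
modulo `p`. Hence already `p ^ (h - L)` does not divide `B j`.
-/

open Finset

lemma not_dvd_pow_add_one_div_add_one {p n : ℕ} (hp : 1 < p) (hn : Odd n) :
    ¬ p ∣ (p ^ n + 1) / (p + 1) := by
  have hdiv : p + 1 ∣ p ^ n + 1 := by simpa using hn.nat_add_dvd_pow_add_pow p 1
  intro hq
  have hpow : p ∣ p ^ n + 1 := Nat.div_mul_cancel hdiv ▸ hq.mul_right (p + 1)
  have hone : p ∣ 1 := (Nat.dvd_add_right (dvd_pow_self p hn.pos.ne')).mp hpow
  exact absurd (Nat.le_of_dvd one_pos hone) (by omega)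

lemma div_pow_log_mod_ne_zero {p j : ℕ} (hp : 1 < p) (hj : j ≠ 0) :
    j / p ^ Nat.log p j % p ≠ 0 := by
  rw [Nat.mod_eq_of_lt (Nat.div_lt_of_lt_mul ?_)]
  · exact (Nat.div_pos (Nat.pow_log_le_self p hj) (by positivity)).ne'
  · rw [← pow_succ]
    exact Nat.lt_pow_succ_log_self hp j

lemma div_pow_mod_eq_zero_of_log_lt {p j ℓ : ℕ} (hp : 1 < p) (hℓ : Nat.log p j < ℓ) :
    j / p ^ ℓ % p = 0 := by
  rw [Nat.div_eq_of_lt (Nat.lt_pow_of_log_lt hp hℓ), Nat.zero_mod]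

lemma not_pow_dvd_sum_mul_pow {p h L : ℕ} (hp : p ≠ 0) (c : ℕ → ℕ) (hL : L < h)
    (hc : ∀ ℓ, L < ℓ → c ℓ = 0) (hcL : ¬ p ∣ c L) :
    ¬ p ^ (h - L) ∣ ∑ ℓ ∈ range h, c ℓ * p ^ (h - 1 - ℓ) := by
  have hsplit : ∑ ℓ ∈ range h, c ℓ * p ^ (h - 1 - ℓ)
      = ∑ ℓ ∈ range L, c ℓ * p ^ (h - 1 - ℓ) + c L * p ^ (h - 1 - L) := by
    rw [← sum_range_succ]
    refine (sum_subset (range_subset_range.2 hL) fun ℓ hℓh hℓL => ?_).symm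
    rw [mem_range] at hℓh hℓL
    rw [hc ℓ (by omega), zero_mul]
  have hlow : p ^ (h - L) ∣ ∑ ℓ ∈ range L, c ℓ * p ^ (h - 1 - ℓ) :=
    dvd_sum fun ℓ hℓ => (pow_dvd_pow p (by rw [mem_range] at hℓ; omega)).mul_left _
  rw [hsplit, Nat.dvd_add_right hlow, show h - L = h - 1 - L + 1 by omega, pow_succ,
    mul_comm (c L)]
  exact fun hd => hcL (Nat.dvd_of_mul_dvd_mul_left (by positivity) hd)

theorem stmt_6_general (p : ℕ) (hp : p.Prime) (h : ℕ)
    (b : ℕ → ℕ) (hb : ∀ ℓ, b ℓ = (p ^ (2 * ℓ + 1) + 1) / (p + 1))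
    (B : ℕ → ℕ)
    (hB : ∀ j, B j = ∑ ℓ ∈ Finset.range h, ((j / p ^ ℓ) % p) * b ℓ * p ^ (h - 1 - ℓ))
    (j : ℕ) (hj1 : 1 ≤ j) (hj2 : j ≤ p ^ h - 1) :
    ¬ (p ^ h ∣ B j) := by
  have hj0 : j ≠ 0 := by omega
  have hL : Nat.log p j < h := Nat.log_lt_of_lt_pow hj0 (by omega)
  have hlead : ¬ p ∣ (j / p ^ Nat.log p j % p) * b (Nat.log p j) := by
    rw [hp.dvd_mul, hb, not_or]
    exact ⟨fun hd => div_pow_log_mod_ne_zero hp.one_lt hj0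
        (Nat.eq_zero_of_dvd_of_lt hd (Nat.mod_lt _ hp.pos)),
      not_dvd_pow_add_one_div_add_one hp.one_lt (odd_two_mul_add_one _)⟩
  have hhigh : ∀ ℓ, Nat.log p j < ℓ → (j / p ^ ℓ % p) * b ℓ = 0 := fun ℓ hℓ => by
    rw [div_pow_mod_eq_zero_of_log_lt hp.one_lt hℓ, zero_mul]
  rw [hB]
  exact fun hd => not_pow_dvd_sum_mul_pow hp.ne_zero (fun ℓ => (j / p ^ ℓ % p) * b ℓ) hL hhigh
    hlead ((pow_dvd_pow p (Nat.sub_le h _)).trans hd)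

/-- with `b ℓ = (p^(2ℓ+1)+1)/(p+1)` and `B` the digit-weighted sum,
`p^h` does not divide `B j` for any `1 ≤ j ≤ p^h - 1`. -/
theorem stmt_6 (p : ℕ) (hp : p.Prime) (h : ℕ) (hh : 1 ≤ h)
    (b : ℕ → ℕ) (hb : ∀ ℓ, b ℓ = (p ^ (2 * ℓ + 1) + 1) / (p + 1))
    (B : ℕ → ℕ)
    (hB : ∀ j, B j = ∑ ℓ ∈ Finset.range h, ((j / p ^ ℓ) % p) * b ℓ * p ^ (h - 1 - ℓ))
    (j : ℕ) (hj1 : 1 ≤ j) (hj2 : j ≤ p ^ h - 1) :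
    ¬ (p ^ h ∣ B j) :=
  stmt_6_general p hp h b hb B hB j hj1 hj2
end

section
/- Let p be an odd prime and h odd. With b_ℓ = (p^{2ℓ+1}+1)/(p+1) and d_j defined as d_j = ⌊(p^h - 1 + B(p^h-1) - B(j))/p^h⌋, suppose j = p^h - k(p+1) and j̃ = p^h - 1 - j = p^h - k'(p+1) with k' = (p^h+1)/(p+1) - k and j < j̃. Then d_j - d_{j̃} = 2k - (p^h+1)/(p+1), which is an odd positive integer; in particular d_j and d_{j̃} have opposite parities. -/
/-- Partial digit sum identity: sum of digits times powers recovers `m % p^n`. -/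
lemma stmt13_digit_sum (p m : ℕ) : ∀ n : ℕ,
    ∑ ℓ ∈ Finset.range n, (m / p ^ ℓ % p) * p ^ ℓ = m % p ^ n := by
  intro n
  induction n with
  | zero => simp [Nat.mod_one]
  | succ n ih =>
    rw [Finset.sum_range_succ, ih, pow_succ, Nat.mod_mul]
    ring

/-- digits of `p^h - 1` are all `p - 1`. -/
lemma stmt13_digits_top (p h ℓ : ℕ) (hp : 2 ≤ p) (hℓ : ℓ < h) :
    (p ^ h - 1) / p ^ ℓ % p = p - 1 := by
  have hA : 1 ≤ p ^ ℓ := Nat.one_le_pow _ _ (by omega)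
  have hC : 1 ≤ p ^ (h - ℓ) := Nat.one_le_pow _ _ (by omega)
  have hAC : p ^ ℓ * p ^ (h - ℓ) = p ^ h := by rw [← pow_add]; congr 1; omega
  have h2 : p ^ ℓ * (p ^ (h - ℓ) - 1) = p ^ ℓ * p ^ (h - ℓ) - p ^ ℓ := by
    rw [Nat.mul_sub, Nat.mul_one]
  have h1 : p ^ h - 1 = p ^ ℓ * (p ^ (h - ℓ) - 1) + (p ^ ℓ - 1) := by
    have hle : p ^ ℓ ≤ p ^ ℓ * p ^ (h - ℓ) := Nat.le_mul_of_pos_right _ (by omega)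
    omega
  rw [h1, Nat.mul_add_div (by omega), Nat.div_eq_of_lt (by omega), Nat.add_zero]
  -- now (p ^ (h-ℓ) - 1) % p = p - 1
  have hd : 1 ≤ h - ℓ := by omega
  have h3 : p ^ (h - ℓ) = p * p ^ (h - ℓ - 1) := by
    rw [← pow_succ']; congr 1; omega
  have hC' : 1 ≤ p ^ (h - ℓ - 1) := Nat.one_le_pow _ _ (by omega)
  have h4 : p ^ (h - ℓ) - 1 = p * (p ^ (h - ℓ - 1) - 1) + (p - 1) := by
    have h5 : p * (p ^ (h - ℓ - 1) - 1) = p * p ^ (h - ℓ - 1) - p := by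
      rw [Nat.mul_sub, Nat.mul_one]
    have hle : p ≤ p * p ^ (h - ℓ - 1) := Nat.le_mul_of_pos_right _ (by omega)
    omega
  rw [h4, Nat.mul_add_mod, Nat.mod_eq_of_lt (by omega)]

/-- geometric sum: `(p-1) * ∑_{i<h} p^i = p^h - 1` in ℕ. -/
lemma stmt13_geom (p h : ℕ) (hp : 1 ≤ p) :
    ∑ ℓ ∈ Finset.range h, (p - 1) * p ^ ℓ = p ^ h - 1 := by
  have h1 : 1 ≤ p ^ h := Nat.one_le_pow _ _ (by omega)
  have hz : ((∑ ℓ ∈ Finset.range h, (p - 1) * p ^ ℓ : ℕ) : ℤ) = ((p ^ h - 1 : ℕ) : ℤ) := by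
    push_cast [Nat.cast_sub hp, Nat.cast_sub h1]
    calc ∑ ℓ ∈ Finset.range h, ((p : ℤ) - 1) * (p : ℤ) ^ ℓ
        = (∑ ℓ ∈ Finset.range h, (p : ℤ) ^ ℓ) * ((p : ℤ) - 1) := by
          rw [Finset.sum_mul]; exact Finset.sum_congr rfl (fun x _ => by ring)
      _ = (p : ℤ) ^ h - 1 := geom_sum_mul (p : ℤ) h
  exact_mod_cast hz


/-- Key lemma: at `j = p^h - k(p+1)` with `1 ≤ k`, the value `d j` equals `k`. -/
lemma stmt13_dval (p : ℕ) (hp : p.Prime) (hodd : Odd p) (h : ℕ) (hh : 1 ≤ h) (hhodd : Odd h)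
    (b : ℕ → ℕ) (hb : ∀ ℓ, b ℓ = (p ^ (2 * ℓ + 1) + 1) / (p + 1))
    (B : ℕ → ℕ)
    (hB : ∀ j, B j = ∑ ℓ ∈ Finset.range h, ((j / p ^ ℓ) % p) * b ℓ * p ^ (h - 1 - ℓ))
    (d : ℕ → ℕ) (hd : ∀ j, d j = (p ^ h - 1 + B (p ^ h - 1) - B j) / p ^ h)
    (k : ℕ) (hk1 : 1 ≤ k) (hkle : k * (p + 1) ≤ p ^ h)
    (j : ℕ) (hjdef : j = p ^ h - k * (p + 1)) :
    d j = k := by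
  have hp2 : 2 ≤ p := hp.two_le
  have hP1 : 1 ≤ p ^ h := Nat.one_le_pow _ _ (by omega)
  have hPp : p ≤ p ^ h := Nat.le_self_pow (by omega) p
  set R : ℕ → ℕ := fun m => ∑ ℓ ∈ Finset.range h, (m / p ^ ℓ % p) * p ^ (h - 1 - ℓ) with hRfun
  have hRdef : ∀ m, R m = ∑ ℓ ∈ Finset.range h, (m / p ^ ℓ % p) * p ^ (h - 1 - ℓ) :=
    fun m => rfl
  have hjP : j < p ^ h := by
    have h1 : 1 ≤ k * (p + 1) := Nat.one_le_iff_ne_zero.mpr (by positivity)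
    omega
  have hbmul : ∀ ℓ : ℕ, b ℓ * (p + 1) = p ^ (2 * ℓ + 1) + 1 := by
    intro ℓ
    rw [hb]
    refine Nat.div_mul_cancel ?_
    simpa using Odd.nat_add_dvd_pow_add_pow p 1 (⟨ℓ, by ring⟩ : Odd (2 * ℓ + 1))
  have hBm : ∀ m, B m * (p + 1) = p ^ h * (m % p ^ h) + R m := by
    intro m
    rw [hB, Finset.sum_mul, ← stmt13_digit_sum p m h, hRdef, Finset.mul_sum,
      ← Finset.sum_add_distrib]
    refine Finset.sum_congr rfl ?_
    intro ℓ hℓ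
    have hℓh : ℓ < h := Finset.mem_range.mp hℓ
    have hpow : p ^ (2 * ℓ + 1) * p ^ (h - 1 - ℓ) = p ^ h * p ^ ℓ := by
      rw [← pow_add, ← pow_add]; congr 1; omega
    calc m / p ^ ℓ % p * b ℓ * p ^ (h - 1 - ℓ) * (p + 1)
        = m / p ^ ℓ % p * (b ℓ * (p + 1)) * p ^ (h - 1 - ℓ) := by ring
      _ = m / p ^ ℓ % p * (p ^ (2 * ℓ + 1) + 1) * p ^ (h - 1 - ℓ) := by rw [hbmul]
      _ = m / p ^ ℓ % p * (p ^ (2 * ℓ + 1) * p ^ (h - 1 - ℓ))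
            + m / p ^ ℓ % p * p ^ (h - 1 - ℓ) := by ring
      _ = p ^ h * (m / p ^ ℓ % p * p ^ ℓ) + m / p ^ ℓ % p * p ^ (h - 1 - ℓ) := by
            rw [hpow]; ring
  have hRle : ∀ m, R m ≤ p ^ h - 1 := by
    intro m
    have h1 : R m ≤ ∑ ℓ ∈ Finset.range h, (p - 1) * p ^ (h - 1 - ℓ) := by
      rw [hRdef]
      refine Finset.sum_le_sum ?_
      intro ℓ _
      refine Nat.mul_le_mul_right _ ?_
      have := Nat.mod_lt (m / p ^ ℓ) (show 0 < p by omega)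
      omega
    have h2 : ∑ ℓ ∈ Finset.range h, (p - 1) * p ^ (h - 1 - ℓ) = p ^ h - 1 :=
      (Finset.sum_range_reflect (fun i => (p - 1) * p ^ i) h).trans
        (stmt13_geom p h (by omega))
    omega
  have hRtop : R (p ^ h - 1) = p ^ h - 1 := by
    have h1 : R (p ^ h - 1) = ∑ ℓ ∈ Finset.range h, (p - 1) * p ^ (h - 1 - ℓ) := by
      rw [hRdef]
      refine Finset.sum_congr rfl ?_
      intro ℓ hℓ
      rw [stmt13_digits_top p h ℓ hp2 (Finset.mem_range.mp hℓ)]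
    rw [h1]
    exact (Finset.sum_range_reflect (fun i => (p - 1) * p ^ i) h).trans
      (stmt13_geom p h (by omega))
  -- congruence mod p + 1
  have hpz : ((p : ZMod (p + 1))) = -1 := by
    have h0 : ((p + 1 : ℕ) : ZMod (p + 1)) = 0 := ZMod.natCast_self _
    push_cast at h0
    exact eq_neg_of_add_eq_zero_left h0
  have hRc : ((R j : ℕ) : ZMod (p + 1)) = ((j : ℕ) : ZMod (p + 1)) := by
    have hjm : j % p ^ h = j := Nat.mod_eq_of_lt hjP
    conv_rhs => rw [← hjm, ← stmt13_digit_sum p j h]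
    rw [hRdef]
    push_cast
    refine Finset.sum_congr rfl ?_
    intro ℓ hℓ
    have hℓh : ℓ < h := Finset.mem_range.mp hℓ
    congr 1
    rw [hpz]
    obtain ⟨t, ht⟩ := hhodd
    rcases Nat.even_or_odd ℓ with he | ho
    · obtain ⟨u, hu⟩ := he
      rw [Even.neg_one_pow (⟨u, hu⟩ : Even ℓ),
        Even.neg_one_pow (⟨t - u, by omega⟩ : Even (h - 1 - ℓ))]
    · obtain ⟨u, hu⟩ := ho
      rw [Odd.neg_one_pow (⟨u, hu⟩ : Odd ℓ),
        Odd.neg_one_pow (⟨t - u - 1, by omega⟩ : Odd (h - 1 - ℓ))]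
  have hjz : ((j : ℕ) : ZMod (p + 1)) = -1 := by
    have h1 : ((j : ℕ) : ZMod (p + 1))
        = ((p ^ h : ℕ) : ZMod (p + 1)) - ((k * (p + 1) : ℕ) : ZMod (p + 1)) := by
      rw [hjdef, Nat.cast_sub hkle]
    have h2 : ((k * (p + 1) : ℕ) : ZMod (p + 1)) = 0 := by
      rw [Nat.cast_mul, ZMod.natCast_self, mul_zero]
    have h3 : ((p ^ h : ℕ) : ZMod (p + 1)) = -1 := by
      push_cast; rw [hpz]; exact hhodd.neg_one_pow
    rw [h1, h2, h3]; ring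
  have hdvd : (p + 1) ∣ (p + 2 + R j) := by
    rw [← ZMod.natCast_eq_zero_iff]
    push_cast
    rw [hRc, hjz, hpz]
    ring
  set s : ℕ := (p + 2 + R j) / (p + 1) with hsdef
  have hs : s * (p + 1) = p + 2 + R j := Nat.div_mul_cancel hdvd
  have hs1 : 1 ≤ s := by
    rcases Nat.eq_zero_or_pos s with h0 | h1
    · rw [h0, zero_mul] at hs; omega
    · exact h1
  have hsP : s ≤ p ^ h := by
    refine Nat.le_of_mul_le_mul_right ?_ (show 0 < p + 1 by omega)
    rw [hs]
    have hRj := hRle j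
    have h1 : p + 1 ≤ p ^ h * p := by
      calc p + 1 ≤ p * p := by nlinarith
        _ ≤ p ^ h * p := Nat.mul_le_mul_right p hPp
    have h3 : p ^ h * (p + 1) = p ^ h * p + p ^ h := by ring
    omega
  have hBle : B j ≤ B (p ^ h - 1) := by
    refine Nat.le_of_mul_le_mul_right ?_ (show 0 < p + 1 by omega)
    rw [hBm j, hBm (p ^ h - 1), Nat.mod_eq_of_lt hjP, Nat.mod_eq_of_lt (by omega), hRtop]
    have hRj := hRle j
    have h1 : p ^ h * j ≤ p ^ h * (p ^ h - 1) := Nat.mul_le_mul_left _ (by omega)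
    omega
  have hsub : B j ≤ p ^ h - 1 + B (p ^ h - 1) := by omega
  -- the key integer identity
  have e1n : B j * (p + 1) = p ^ h * j + R j := by rw [hBm j, Nat.mod_eq_of_lt hjP]
  have e2n : B (p ^ h - 1) * (p + 1) = p ^ h * (p ^ h - 1) + (p ^ h - 1) := by
    rw [hBm (p ^ h - 1), Nat.mod_eq_of_lt (by omega), hRtop]
  have e3n : j + k * (p + 1) = p ^ h := by omega
  have e1z : (B j : ℤ) * ((p : ℤ) + 1) = (p : ℤ) ^ h * j + R j := by exact_mod_cast e1n
  have e2z : (B (p ^ h - 1) : ℤ) * ((p : ℤ) + 1)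
      = (p : ℤ) ^ h * ((p : ℤ) ^ h - 1) + ((p : ℤ) ^ h - 1) := by
    zify [hP1] at e2n
    convert e2n using 2 <;> push_cast <;> ring
  have e3z : (j : ℤ) + (k : ℤ) * ((p : ℤ) + 1) = (p : ℤ) ^ h := by exact_mod_cast e3n
  have e5z : (s : ℤ) * ((p : ℤ) + 1) = (p : ℤ) + 2 + (R j : ℤ) := by exact_mod_cast hs
  have key : ((p ^ h - 1 + B (p ^ h - 1) - B j : ℕ) : ℤ) = ((k : ℤ) + 1) * (p : ℤ) ^ h - s := by
    rw [Nat.cast_sub hsub]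
    push_cast [Nat.cast_sub hP1]
    refine mul_right_cancel₀ (show ((p : ℤ) + 1) ≠ 0 by positivity) ?_
    calc ((p : ℤ) ^ h - 1 + (B (p ^ h - 1) : ℤ) - (B j : ℤ)) * ((p : ℤ) + 1)
        = ((p : ℤ) ^ h - 1) * ((p : ℤ) + 1) + (B (p ^ h - 1) : ℤ) * ((p : ℤ) + 1)
          - (B j : ℤ) * ((p : ℤ) + 1) := by ring
      _ = ((p : ℤ) ^ h - 1) * ((p : ℤ) + 1)
          + ((p : ℤ) ^ h * ((p : ℤ) ^ h - 1) + ((p : ℤ) ^ h - 1))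
          - ((p : ℤ) ^ h * j + R j) := by rw [e2z, e1z]
      _ = (((k : ℤ) + 1) * (p : ℤ) ^ h - s) * ((p : ℤ) + 1)
          + ((s : ℤ) * ((p : ℤ) + 1) - ((p : ℤ) + 2 + (R j : ℤ)))
          - (p : ℤ) ^ h * ((j : ℤ) + (k : ℤ) * ((p : ℤ) + 1) - (p : ℤ) ^ h) := by ring
      _ = (((k : ℤ) + 1) * (p : ℤ) ^ h - s) * ((p : ℤ) + 1) := by
          rw [e5z, e3z]; ring
  have hnumn : p ^ h - 1 + B (p ^ h - 1) - B j = p ^ h * k + (p ^ h - s) := by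
    have hz : ((p ^ h - 1 + B (p ^ h - 1) - B j : ℕ) : ℤ)
        = ((p ^ h * k + (p ^ h - s) : ℕ) : ℤ) := by
      rw [key]
      push_cast [Nat.cast_sub hsP]
      ring
    exact_mod_cast hz
  rw [hd, hnumn, Nat.mul_add_div (by omega), Nat.div_eq_of_lt (by omega), Nat.add_zero]

/-- `p` odd prime, `h` odd, `d_j` as in the `w₀ = 1` setting. If
`j = p^h - k(p+1)`, `j̃ = p^h - 1 - j = p^h - k'(p+1)` with `k' = (p^h+1)/(p+1) - k`
and `j < j̃`, then `d j - d j̃ = 2k - (p^h+1)/(p+1)` is an odd positive integer; in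
particular `d j` and `d j̃` have opposite parities. -/
theorem stmt_13 (p : ℕ) (hp : p.Prime) (hodd : Odd p) (h : ℕ) (hh : 1 ≤ h) (hhodd : Odd h)
    (b : ℕ → ℕ) (hb : ∀ ℓ, b ℓ = (p ^ (2 * ℓ + 1) + 1) / (p + 1))
    (B : ℕ → ℕ)
    (hB : ∀ j, B j = ∑ ℓ ∈ Finset.range h, ((j / p ^ ℓ) % p) * b ℓ * p ^ (h - 1 - ℓ))
    (d : ℕ → ℕ) (hd : ∀ j, d j = (p ^ h - 1 + B (p ^ h - 1) - B j) / p ^ h)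
    (k k' j jt : ℕ)
    (hkle : k * (p + 1) ≤ p ^ h) (hj : j = p ^ h - k * (p + 1))
    (hjt : jt = p ^ h - 1 - j)
    (hk'le : k' * (p + 1) ≤ p ^ h) (hjt' : jt = p ^ h - k' * (p + 1))
    (hk' : k' = (p ^ h + 1) / (p + 1) - k)
    (hlt : j < jt) :
    (d j : ℤ) - (d jt : ℤ) = 2 * (k : ℤ) - ((p ^ h + 1) / (p + 1) : ℕ) ∧
    Odd ((d j : ℤ) - (d jt : ℤ)) ∧
    0 < (d j : ℤ) - (d jt : ℤ) ∧
    (Odd (d j) ↔ Even (d jt)) := by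
  have hp2 : 2 ≤ p := hp.two_le
  have hP1 : 1 ≤ p ^ h := Nat.one_le_pow _ _ (by omega)
  set M : ℕ := (p ^ h + 1) / (p + 1) with hMdef
  have hMdvd : (p + 1) ∣ p ^ h + 1 := by
    simpa using Odd.nat_add_dvd_pow_add_pow p 1 hhodd
  have hM : M * (p + 1) = p ^ h + 1 := Nat.div_mul_cancel hMdvd
  -- 1 ≤ k and 1 ≤ k'
  have hk1 : 1 ≤ k := by
    rcases Nat.eq_zero_or_pos k with h0 | h1
    · rw [h0, zero_mul, Nat.sub_zero] at hj; omega
    · exact h1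
  have hk'1 : 1 ≤ k' := by
    rcases Nat.eq_zero_or_pos k' with h0 | h1
    · rw [h0, zero_mul, Nat.sub_zero] at hjt'; omega
    · exact h1
  have hdj : d j = k :=
    stmt13_dval p hp hodd h hh hhodd b hb B hB d hd k hk1 hkle j hj
  have hdjt : d jt = k' :=
    stmt13_dval p hp hodd h hh hhodd b hb B hB d hd k' hk'1 hk'le jt hjt'
  -- k < M and k' < k
  have hkM : k < M := by
    refine Nat.lt_of_mul_lt_mul_right (a := p + 1) ?_
    omega
  have hkk' : k + k' = M := by omega
  have hk'k : k' < k := by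
    refine Nat.lt_of_mul_lt_mul_right (a := p + 1) ?_
    omega
  -- M is odd
  have hModd : Odd M := by
    have hpz1 : ((p : ℤ) + 1) ≠ 0 := by positivity
    have hMz : (M : ℤ) * ((p : ℤ) + 1) = (p : ℤ) ^ h + 1 := by exact_mod_cast hM
    have hgeo : (∑ i ∈ Finset.range h, (-(p : ℤ)) ^ i) * ((p : ℤ) + 1) = (p : ℤ) ^ h + 1 := by
      have hg := geom_sum_mul (-(p : ℤ)) h
      rw [hhodd.neg_pow] at hg
      have h2 : (∑ i ∈ Finset.range h, (-(p : ℤ)) ^ i) * ((p : ℤ) + 1)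
          = -((∑ i ∈ Finset.range h, (-(p : ℤ)) ^ i) * (-(p : ℤ) - 1)) := by ring
      rw [h2, hg]; ring
    have hMsum : (M : ℤ) = ∑ i ∈ Finset.range h, (-(p : ℤ)) ^ i :=
      mul_right_cancel₀ hpz1 (hMz.trans hgeo.symm)
    have hp21 : ((p : ZMod 2)) = 1 := by
      obtain ⟨u, hu⟩ := hodd
      rw [hu]; push_cast
      rw [show ((2 : ZMod 2)) = 0 from by decide]
      ring
    have hMZ2 : ((M : ℕ) : ZMod 2) = ((h : ℕ) : ZMod 2) := by
      have : (((M : ℤ) : ZMod 2)) = ((h : ℕ) : ZMod 2) := by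
        rw [hMsum]
        push_cast
        rw [hp21, show (-(1 : ZMod 2)) = 1 from by decide]
        simp
      simpa using this
    rw [Nat.odd_iff]
    rcases Nat.mod_two_eq_zero_or_one M with h0 | h1
    · exfalso
      obtain ⟨t, ht⟩ := hhodd
      rw [← Nat.mod_add_div M 2, ← Nat.mod_add_div h 2, h0, ht] at hMZ2
      simp only [Nat.mul_add_mod] at hMZ2
      push_cast at hMZ2
      rw [show ((2 : ZMod 2)) = 0 from by decide] at hMZ2
      simp at hMZ2
    · exact h1
  obtain ⟨t, ht⟩ := hModd
  refine ⟨by omega, ⟨(k : ℤ) - t - 1, by omega⟩, by omega, ?_⟩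
  rw [hdj, hdjt, Nat.odd_iff, Nat.even_iff]
  omega
end
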